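/- If P is a perfect matching of a snake graph G = (G_1, ..., G_d) and a positive twist at tile G_j is applicable to P (i.e., P contains both N(G_j) and S(G_j) when j is odd, or both W(G_j) and E(G_j) when j is even), then the result P' of the twist is again a perfect matching of G, and P can be recovered from P' by the inverse twist at G_j. -/

import Mathlib

/- ## Snake graphs on the integer lattice -/

abbrev Vtx : Type := ℤ × ℤ
abbrev Edge : Type := Sym2 Vtx

/-- One gluing move: `true` = new tile to the right, `false` = new tile on top. -/
def mv (p : Vtx) (m : Bool) : Vtx := if m then (p.1 + 1, p.2) else (p.1, p.2 + 1)

/-- Positions (south-west corners) of the tiles of the snake graph with move list `ms`;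
the snake graph has `ms.length + 1` tiles, the first at `(0,0)`. -/
def positions (ms : List Bool) : List Vtx := ms.scanl mv (0, 0)

def tilePos (ms : List Bool) (t : ℕ) : Vtx := (positions ms).getD t (0, 0)

def tileVerts (p : Vtx) : Finset Vtx :=
  {p, (p.1 + 1, p.2), (p.1, p.2 + 1), (p.1 + 1, p.2 + 1)}

def eS (p : Vtx) : Edge := s(p, (p.1 + 1, p.2))
def eW (p : Vtx) : Edge := s(p, (p.1, p.2 + 1))
def eN (p : Vtx) : Edge := s((p.1, p.2 + 1), (p.1 + 1, p.2 + 1))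
def eE (p : Vtx) : Edge := s((p.1 + 1, p.2), (p.1 + 1, p.2 + 1))

def tileEdges (p : Vtx) : Finset Edge := {eS p, eW p, eN p, eE p}

def snakeVerts (ms : List Bool) : Finset Vtx := (positions ms).toFinset.biUnion tileVerts
def snakeEdges (ms : List Bool) : Finset Edge := (positions ms).toFinset.biUnion tileEdges

/-- A perfect matching of the snake graph: a set of edges covering every vertex exactly once. -/
def IsPerfectMatching (ms : List Bool) (P : Finset Edge) : Prop :=
  P ⊆ snakeEdges ms ∧ ∀ v ∈ snakeVerts ms, ∃! e, e ∈ P ∧ v ∈ e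

/-- Same, for a possibly infinite set of edges. -/
def IsPerfectMatchingSet (ms : List Bool) (P : Set Edge) : Prop :=
  P ⊆ ↑(snakeEdges ms) ∧ ∀ v ∈ snakeVerts ms, ∃! e, e ∈ P ∧ v ∈ e

/-- A boundary edge: an edge belonging to exactly one tile. -/
def IsBoundaryEdge (ms : List Bool) (e : Edge) : Prop :=
  ((positions ms).toFinset.filter (fun p => e ∈ tileEdges p)).card = 1

/-- Two boundary edges lie in the same parity class iff they are joined by an
even-length walk along the boundary (consecutive boundary edges share a vertex). -/
def SameParity (ms : List Bool) (e f : Edge) : Prop :=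
  Relation.ReflTransGen
    (fun a b => ∃ c,
      (a ≠ c ∧ IsBoundaryEdge ms a ∧ IsBoundaryEdge ms c ∧ ∃ v, v ∈ a ∧ v ∈ c) ∧
      (c ≠ b ∧ IsBoundaryEdge ms c ∧ IsBoundaryEdge ms b ∧ ∃ v, v ∈ c ∧ v ∈ b)) e f

/- ## The orientation of diagonals induced by a perfect matching -/

def NWv (p : Vtx) : Vtx := (p.1, p.2 + 1)
def SEv (p : Vtx) : Vtx := (p.1 + 1, p.2)
def NEv (p : Vtx) : Vtx := (p.1 + 1, p.2 + 1)

/-- Entry point of the alternating walk on the diagonal of tile `t`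
(`o t = true` means the diagonal is oriented "down", i.e. from NW to SE). -/
def diagIn (ms : List Bool) (o : ℕ → Bool) (t : ℕ) : Vtx :=
  if o t then NWv (tilePos ms t) else SEv (tilePos ms t)

def diagOut (ms : List Bool) (o : ℕ → Bool) (t : ℕ) : Vtx :=
  if o t then SEv (tilePos ms t) else NWv (tilePos ms t)

/-- The list of matched edges traversed by the alternating walk from the SW vertex of the
first tile to the NE vertex of the last tile, given the diagonal orientations `o`. -/
def walkEdgeList (ms : List Bool) (o : ℕ → Bool) : List Edge :=
  s(((0, 0) : Vtx), diagIn ms o 0) ::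
    ((List.range ms.length).map fun t => s(diagOut ms o t, diagIn ms o (t + 1))) ++
      [s(diagOut ms o ms.length, NEv (tilePos ms ms.length))]

/-- `o` is the orientation of the diagonals induced by the perfect matching `P`:
the alternating walk uses each matched edge exactly once, and its matched edges are
exactly the edges of `P`. -/
def IsInducedOrientation (ms : List Bool) (P : Finset Edge) (o : ℕ → Bool) : Prop :=
  (walkEdgeList ms o).Nodup ∧ P = (walkEdgeList ms o).toFinset

/-- The set of (0-indexed) tiles whose diagonal is positive: "down" and relative
orientation `+1` (equivalently even index), or "up" and odd index. -/
def heightSet (ms : List Bool) (o : ℕ → Bool) : Set ℕ :=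
  {t | t ≤ ms.length ∧ (o t = true ↔ Even t)}

def HeightOf (ms : List Bool) (P : Finset Edge) (I : Set ℕ) : Prop :=
  ∃ o, IsInducedOrientation ms P o ∧ I = heightSet ms o

/- ## The quiver of a snake graph (0-indexed tiles) -/

/-- Arrow relation of the quiver `Q_G` (0-indexed: tile `i` here is tile `i+1` of the paper). -/
def quiverRel (ms : List Bool) (i j : ℕ) : Prop :=
  (j = i + 1 ∧ i < ms.length ∧ (ms.getD i true = true ↔ Even i)) ∨
  (i = j + 1 ∧ j < ms.length ∧ ¬(ms.getD j true = true ↔ Even j))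

def leQ (ms : List Bool) (i j : ℕ) : Prop :=
  i = j ∨ Relation.TransGen (quiverRel ms) i j

/-- Order ideals (downward closed subsets) of the poset of `Q_G`. -/
def IsOrderIdealQ (ms : List Bool) (I : Set ℕ) : Prop :=
  I ⊆ {t | t ≤ ms.length} ∧ ∀ x ∈ I, ∀ y, leQ ms y x → y ∈ I

/-- `P'` is obtained from `P` by a positive twist at tile `t` (0-indexed; paper's
`j = t+1`, so paper's "`j` odd" is "`t` even"). -/
def PositiveTwist (ms : List Bool) (P P' : Finset Edge) (t : ℕ) : Prop :=
  t ≤ ms.length ∧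
    ((Even t ∧ eN (tilePos ms t) ∈ P ∧ eS (tilePos ms t) ∈ P ∧
        P' = insert (eW (tilePos ms t)) (insert (eE (tilePos ms t))
          ((P.erase (eN (tilePos ms t))).erase (eS (tilePos ms t))))) ∨
      (¬Even t ∧ eW (tilePos ms t) ∈ P ∧ eE (tilePos ms t) ∈ P ∧
        P' = insert (eN (tilePos ms t)) (insert (eS (tilePos ms t))
          ((P.erase (eW (tilePos ms t))).erase (eE (tilePos ms t))))))

/- ## Loop graphs -/

/-- The non-SW vertex of the boundary edge `c'` of tile `k` used for the loop at the first
tile (`c'` is the South or West edge of tile `k`, whichever is a boundary edge). -/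
def startX' (ms : List Bool) (k : ℕ) : Vtx :=
  if ms.getD (k - 1) true then SEv (tilePos ms k) else NWv (tilePos ms k)

/-- The non-SW vertex of the chosen cut edge `c ∈ {S(G₁), W(G₁)}` (`b = true` means `c = S(G₁)`). -/
def startY (b : Bool) : Vtx := if b then (1, 0) else (0, 1)

/-- The identification map for a loop at the first tile, glued to tile `k`:
`x = (0,0) ↦ x'` and `y ↦ y' = tilePos ms k`. -/
def startGlue (ms : List Bool) (k : ℕ) (b : Bool) : Vtx → Vtx := fun v =>
  if v = (0, 0) then startX' ms k else if v = startY b then tilePos ms k else v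

def endX (ms : List Bool) : Vtx := NEv (tilePos ms ms.length)

/-- The non-NE vertex of the chosen cut edge `c ∈ {N(G_d), E(G_d)}` (`b = true` means `c = N(G_d)`). -/
def endY (ms : List Bool) (b : Bool) : Vtx :=
  if b then NWv (tilePos ms ms.length) else SEv (tilePos ms ms.length)

def endX' (ms : List Bool) (k : ℕ) : Vtx :=
  if ms.getD k true then NWv (tilePos ms k) else SEv (tilePos ms k)

/-- The identification map for a loop at the last tile, glued to tile `k`. -/
def endGlue (ms : List Bool) (k : ℕ) (b : Bool) : Vtx → Vtx := fun v =>
  if v = endX ms then endX' ms k else if v = endY ms b then NEv (tilePos ms k) else v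

/-- The quotient map of a loop graph with optional loops at each end,
each given by the index of the tile it is glued to and the choice of cut edge. -/
def loopMap (ms : List Bool) (L1 L2 : Option (ℕ × Bool)) : Vtx → Vtx :=
  (Option.elim L2 id fun kb => endGlue ms kb.1 kb.2) ∘
    (Option.elim L1 id fun kb => startGlue ms kb.1 kb.2)

def loopEdges (ms : List Bool) (q : Vtx → Vtx) : Finset Edge :=
  (snakeEdges ms).image (Sym2.map q)

def loopVerts (ms : List Bool) (q : Vtx → Vtx) : Finset Vtx := (snakeVerts ms).image q

/-- A perfect matching of the loop graph with quotient map `q`. -/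
def IsLoopPM (ms : List Bool) (q : Vtx → Vtx) (P : Finset Edge) : Prop :=
  P ⊆ loopEdges ms q ∧ ∀ v ∈ loopVerts ms q, ∃! e, e ∈ P ∧ v ∈ e

/-- `Q` is a perfect matching of the underlying snake graph extending
the matching `P` of the loop graph. -/
def ExtendsTo (ms : List Bool) (q : Vtx → Vtx) (Q P : Finset Edge) : Prop :=
  IsPerfectMatching ms Q ∧ Q.image (Sym2.map q) = P

/-- A good matching: a perfect matching of the loop graph extendable to the snake graph. -/
def IsGoodMatching (ms : List Bool) (q : Vtx → Vtx) (P : Finset Edge) : Prop :=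
  IsLoopPM ms q P ∧ ∃ Q, ExtendsTo ms q Q P

/-- The vertex `v` is matched in `P` by (the image of) a snake-graph edge at `v`
other than the cut-side edge `c`. -/
def SideMatched (ms : List Bool) (q : Vtx → Vtx) (P : Finset Edge) (v : Vtx) (c : Edge) : Prop :=
  ∃ e₀ ∈ snakeEdges ms, e₀ ≠ c ∧ v ∈ e₀ ∧ Sym2.map q e₀ ∈ P

/-- The height of a good matching of a loop graph, via an extension to the snake graph. -/
def LoopHeightOf (ms : List Bool) (q : Vtx → Vtx) (P : Finset Edge) (I : Set ℕ) : Prop :=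
  ∃ Q, ExtendsTo ms q Q P ∧ HeightOf ms Q I

/-- A perfect matching of an abstract simple graph, as a set of edges. -/
def IsPMSet {W : Type*} (G : SimpleGraph W) (P : Set (Sym2 W)) : Prop :=
  P ⊆ G.edgeSet ∧ ∀ v : W, ∃! e, e ∈ P ∧ v ∈ e

/-! A positive twist exchanges the two opposite sides `{a, b}` of a tile for the other two
sides `{c, d}`. Both pairs cover the same four vertices, and each pair is itself a matching of
them, so every vertex keeps exactly one matched edge. The new sides were not in `P`: each shares
a vertex with an old side, the unique edge of `P` at that vertex. Hence the inverse exchange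
gives back `P`. -/

section ReplacePair

variable {α : Type*} [DecidableEq α]

def replacePair (P : Finset (Sym2 α)) (a b c d : Sym2 α) : Finset (Sym2 α) :=
  insert c (insert d ((P.erase a).erase b))

variable {P : Finset (Sym2 α)} {a b c d e : Sym2 α} {v : α}

lemma mem_replacePair :
    e ∈ replacePair P a b c d ↔ e = c ∨ e = d ∨ (e ≠ b ∧ e ≠ a ∧ e ∈ P) := by
  simp [replacePair]

lemma replacePair_comm : replacePair P a b c d = replacePair P a b d c :=
  Finset.insert_comm c d _

lemma replacePair_subset {E : Finset (Sym2 α)} (hP : P ⊆ E) (hc : c ∈ E) (hd : d ∈ E) :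
    replacePair P a b c d ⊆ E := by
  intro e he
  rcases mem_replacePair.1 he with rfl | rfl | ⟨-, -, heP⟩
  exacts [hc, hd, hP heP]

lemma replacePair_replacePair (ha : a ∈ P) (hb : b ∈ P) (hc : c ∉ P) (hd : d ∉ P) :
    replacePair (replacePair P a b c d) c d a b = P := by
  ext e
  simp only [mem_replacePair]
  by_cases heP : e ∈ P
  · have hec : e ≠ c := ne_of_mem_of_not_mem heP hc
    have hed : e ≠ d := ne_of_mem_of_not_mem heP hd
    tauto
  · have hea : e ≠ a := (ne_of_mem_of_not_mem ha heP).symm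
    have heb : e ≠ b := (ne_of_mem_of_not_mem hb heP).symm
    tauto

lemma existsUnique_mem_replacePair_of_mem_left (h : ∃! e, e ∈ P ∧ v ∈ e) (ha : a ∈ P)
    (hb : b ∈ P) (hvc : v ∈ c) (hvd : v ∉ d) (hvab : v ∈ a ∨ v ∈ b) :
    ∃! e, e ∈ replacePair P a b c d ∧ v ∈ e := by
  refine ⟨c, ⟨mem_replacePair.2 (Or.inl rfl), hvc⟩, ?_⟩
  rintro e ⟨he, hve⟩
  rcases mem_replacePair.1 he with rfl | rfl | ⟨heb, hea, heP⟩
  · rfl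
  · exact absurd hve hvd
  · rcases hvab with hva | hvb
    · exact absurd (h.unique ⟨heP, hve⟩ ⟨ha, hva⟩) hea
    · exact absurd (h.unique ⟨heP, hve⟩ ⟨hb, hvb⟩) heb

lemma existsUnique_mem_replacePair_of_notMem (h : ∃! e, e ∈ P ∧ v ∈ e) (hva : v ∉ a)
    (hvb : v ∉ b) (hvc : v ∉ c) (hvd : v ∉ d) :
    ∃! e, e ∈ replacePair P a b c d ∧ v ∈ e := by
  refine (existsUnique_congr fun e => ?_).1 h
  rw [mem_replacePair]
  constructor
  · rintro ⟨heP, hve⟩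
    exact ⟨Or.inr (Or.inr ⟨by rintro rfl; exact hvb hve, by rintro rfl; exact hva hve, heP⟩),
      hve⟩
  · rintro ⟨rfl | rfl | ⟨-, -, heP⟩, hve⟩
    exacts [absurd hve hvc, absurd hve hvd, ⟨heP, hve⟩]

lemma forall_existsUnique_mem_replacePair {V : Set α}
    (hP : ∀ v ∈ V, ∃! e, e ∈ P ∧ v ∈ e) (ha : a ∈ P) (hb : b ∈ P)
    (hcover : ∀ v, v ∈ a ∨ v ∈ b ↔ v ∈ c ∨ v ∈ d) (hcd : ∀ v ∈ c, v ∉ d) :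
    ∀ v ∈ V, ∃! e, e ∈ replacePair P a b c d ∧ v ∈ e := by
  intro v hv
  by_cases hvc : v ∈ c
  · exact existsUnique_mem_replacePair_of_mem_left (hP v hv) ha hb hvc (hcd v hvc)
      ((hcover v).2 (Or.inl hvc))
  by_cases hvd : v ∈ d
  · rw [replacePair_comm]
    exact existsUnique_mem_replacePair_of_mem_left (hP v hv) ha hb hvd
      (fun hvc' => hcd v hvc' hvd) ((hcover v).2 (Or.inr hvd))
  have hvab : ¬(v ∈ a ∨ v ∈ b) := fun hab => by
    rcases (hcover v).1 hab with h | h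
    exacts [hvc h, hvd h]
  exact existsUnique_mem_replacePair_of_notMem (hP v hv) (fun h => hvab (Or.inl h))
    (fun h => hvab (Or.inr h)) hvc hvd

end ReplacePair

section Tile

variable (p : Vtx) {v : Vtx}

lemma mem_eN_or_mem_eS_iff : v ∈ eN p ∨ v ∈ eS p ↔ v ∈ eW p ∨ v ∈ eE p := by
  simp only [eN, eS, eW, eE, Sym2.mem_iff, Prod.ext_iff]
  omega

lemma notMem_eS_of_mem_eN (h : v ∈ eN p) : v ∉ eS p := by
  simp only [eN, eS, Sym2.mem_iff, Prod.ext_iff] at h ⊢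
  omega

lemma notMem_eE_of_mem_eW (h : v ∈ eW p) : v ∉ eE p := by
  simp only [eW, eE, Sym2.mem_iff, Prod.ext_iff] at h ⊢
  omega

lemma eW_ne_eS : eW p ≠ eS p := by
  simp only [eW, eS, ne_eq, Sym2.eq_iff, Prod.ext_iff]
  omega

lemma eE_ne_eS : eE p ≠ eS p := by
  simp only [eE, eS, ne_eq, Sym2.eq_iff, Prod.ext_iff]
  omega

lemma eN_ne_eW : eN p ≠ eW p := by
  simp only [eN, eW, ne_eq, Sym2.eq_iff, Prod.ext_iff]
  omega

lemma mem_tileVerts_of_mem_tileEdges {e : Edge} (he : e ∈ tileEdges p) (hv : v ∈ e) :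
    v ∈ tileVerts p := by
  simp only [tileEdges, Finset.mem_insert, Finset.mem_singleton] at he
  rcases he with rfl | rfl | rfl | rfl <;>
    · simp only [eS, eW, eN, eE, Sym2.mem_iff] at hv
      rcases hv with rfl | rfl <;> simp [tileVerts]

end Tile

section Snake

variable {ms : List Bool} {P : Finset Edge} {p : Vtx}

lemma tilePos_mem_positions {t : ℕ} (ht : t ≤ ms.length) :
    tilePos ms t ∈ (positions ms).toFinset := by
  have ht' : t < (positions ms).length := by
    rw [positions, List.length_scanl]
    omega
  rw [List.mem_toFinset, tilePos, List.getD_eq_getElem _ _ ht']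
  exact List.getElem_mem _

lemma mem_snakeEdges_of_mem_tileEdges (hp : p ∈ (positions ms).toFinset) {e : Edge}
    (he : e ∈ tileEdges p) : e ∈ snakeEdges ms :=
  Finset.mem_biUnion.2 ⟨p, hp, he⟩

lemma mem_snakeVerts_of_mem_tileEdges (hp : p ∈ (positions ms).toFinset) {e : Edge}
    (he : e ∈ tileEdges p) {v : Vtx} (hv : v ∈ e) : v ∈ snakeVerts ms :=
  Finset.mem_biUnion.2 ⟨p, hp, mem_tileVerts_of_mem_tileEdges p he hv⟩

lemma IsPerfectMatching.replacePair (hP : IsPerfectMatching ms P) {a b c d : Edge}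
    (ha : a ∈ P) (hb : b ∈ P) (hc : c ∈ snakeEdges ms) (hd : d ∈ snakeEdges ms)
    (hcover : ∀ v, v ∈ a ∨ v ∈ b ↔ v ∈ c ∨ v ∈ d) (hcd : ∀ v ∈ c, v ∉ d) :
    IsPerfectMatching ms (replacePair P a b c d) :=
  ⟨replacePair_subset hP.1 hc hd, forall_existsUnique_mem_replacePair hP.2 ha hb hcover hcd⟩

lemma IsPerfectMatching.notMem_of_ne (hP : IsPerfectMatching ms P)
    (hp : p ∈ (positions ms).toFinset) {c a : Edge} (hc : c ∈ tileEdges p) (ha : a ∈ P)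
    {v : Vtx} (hvc : v ∈ c) (hva : v ∈ a) (hca : c ≠ a) : c ∉ P := fun hcP =>
  hca ((hP.2 v (mem_snakeVerts_of_mem_tileEdges hp hc hvc)).unique ⟨hcP, hvc⟩ ⟨ha, hva⟩)

end Snake

/-- if a positive twist at tile `t` is applicable to a perfect matching `P`,
then its result `P'` is again a perfect matching, and `P` is recovered from `P'` by the
inverse twist at `t`. -/
theorem statement17 (ms : List Bool) (P P' : Finset Edge) (t : ℕ)
    (hP : IsPerfectMatching ms P) (h : PositiveTwist ms P P' t) :
    IsPerfectMatching ms P' ∧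
    (Even t → insert (eN (tilePos ms t)) (insert (eS (tilePos ms t))
      ((P'.erase (eW (tilePos ms t))).erase (eE (tilePos ms t)))) = P) ∧
    (¬Even t → insert (eW (tilePos ms t)) (insert (eE (tilePos ms t))
      ((P'.erase (eN (tilePos ms t))).erase (eS (tilePos ms t)))) = P) := by
  obtain ⟨ht, hcase⟩ := h
  set p := tilePos ms t
  have hp : p ∈ (positions ms).toFinset := tilePos_mem_positions ht
  have hedge : ∀ e ∈ tileEdges p, e ∈ snakeEdges ms :=
    fun _ => mem_snakeEdges_of_mem_tileEdges hp
  rcases hcase with ⟨hEven, hN, hS, rfl⟩ | ⟨hOdd, hW, hE, rfl⟩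
  · have hW : eW p ∉ P := hP.notMem_of_ne hp (by simp [tileEdges]) hS
      (Sym2.mem_mk_left _ _) (Sym2.mem_mk_left _ _) (eW_ne_eS p)
    have hE : eE p ∉ P := hP.notMem_of_ne hp (by simp [tileEdges]) hS
      (Sym2.mem_mk_left _ _) (Sym2.mem_mk_right _ _) (eE_ne_eS p)
    exact ⟨hP.replacePair hN hS (hedge _ (by simp [tileEdges])) (hedge _ (by simp [tileEdges]))
        (fun _ => mem_eN_or_mem_eS_iff p) (fun _ => notMem_eE_of_mem_eW p),
      fun _ => replacePair_replacePair hN hS hW hE, fun h => absurd hEven h⟩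
  · have hN : eN p ∉ P := hP.notMem_of_ne hp (by simp [tileEdges]) hW
      (Sym2.mem_mk_left _ _) (Sym2.mem_mk_right _ _) (eN_ne_eW p)
    have hS : eS p ∉ P := hP.notMem_of_ne hp (by simp [tileEdges]) hW
      (Sym2.mem_mk_left _ _) (Sym2.mem_mk_left _ _) (eW_ne_eS p).symm
    exact ⟨hP.replacePair hW hE (hedge _ (by simp [tileEdges])) (hedge _ (by simp [tileEdges]))
        (fun _ => (mem_eN_or_mem_eS_iff p).symm) (fun _ => notMem_eS_of_mem_eN p),
      fun h => absurd h hOdd, fun _ => replacePair_replacePair hW hE hN hS⟩
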